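/- For an MPBKP-S instance with items indexed so that d_1 ≤ … ≤ d_n, fix κ > 0 and define the rounded profit P̂(S) as follows: set r̂_i = κ·⌊r_i/κ⌋; for each period t, let L_t(S) = max_{0 ≤ t' < t} ( c_t − c_{t'} − ∑_{i∈S : t' < d_i ≤ t−1} q_i ) be the capacity available in period t, list the items of S with deadline t in increasing index order as i_1,…,i_k, and charge item i_ℓ the penalty κ·⌈ B·max(0, q_{i_ℓ} − max(0, L_t(S) − ∑_{m<ℓ} q_{i_m}) ) / κ ⌉; then P̂(S) = ∑_{i∈S} r̂_i minus the sum of all these penalties. Then: (i) P̂(S) ≤ P(S) ≤ P̂(S) + 2nκ for every S ⊆ {1,…,n}; and (ii) if 0 < ε < 1, P₀ ≤ P(S*), and κ = εP₀/(2n), then every S' maximizing P̂ satisfies P(S') ≥ P̂(S') ≥ (1−ε)·P(S*). -/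
import Mathlib


open scoped BigOperators

/-- Total overflow `Φ(S) = max_{0 ≤ t ≤ T} ( ∑_{i ∈ S : d_i ≤ t} q_i - c_t )`. -/
noncomputable def overflow {n : ℕ} (T : ℕ) (c : ℕ → ℝ) (q : Fin n → ℝ) (d : Fin n → ℕ)
    (S : Finset (Fin n)) : ℝ :=
  (Finset.range (T + 1)).sup' ⟨0, Finset.mem_range.mpr (Nat.succ_pos T)⟩
    fun t => (∑ i ∈ S.filter (fun i => d i ≤ t), q i) - c t

/-- Profit `P(S) = R(S) - B·Φ(S)` of an MPBKP-S instance. -/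
noncomputable def profit {n : ℕ} (T : ℕ) (c : ℕ → ℝ) (B : ℝ) (r q : Fin n → ℝ)
    (d : Fin n → ℕ) (S : Finset (Fin n)) : ℝ :=
  (∑ i ∈ S, r i) - B * overflow T c q d S

/-- Capacity available in period `t` for the solution `S`:
`L_t(S) = max_{0 ≤ t' < t} ( c_t - c_{t'} - ∑_{i ∈ S : t' < d_i ≤ t-1} q_i )`. -/
noncomputable def Lcap {n : ℕ} (c : ℕ → ℝ) (q : Fin n → ℝ) (d : Fin n → ℕ)
    (S : Finset (Fin n)) (t : ℕ) : ℝ :=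
  if h : (Finset.range t).Nonempty then
    (Finset.range t).sup' h
      fun t' => c t - c t' - ∑ i ∈ S.filter (fun i => t' < d i ∧ d i ≤ t - 1), q i
  else 0

/-- Rounded profit `P̂(S)`: rewards are rounded down to multiples of `κ`, and each item
`i ∈ S`, listed within its deadline period in increasing index order, is charged the
rounded-up penalty `κ·⌈B·max(0, q_i - max(0, L_{d_i}(S) - ∑_{j earlier} q_j))/κ⌉`. -/
noncomputable def roundedProfit {n : ℕ} (c : ℕ → ℝ) (B : ℝ) (r q : Fin n → ℝ)
    (d : Fin n → ℕ) (κ : ℝ) (S : Finset (Fin n)) : ℝ :=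
  (∑ i ∈ S, κ * (⌊r i / κ⌋ : ℝ)) -
    ∑ i ∈ S, κ * (⌈B * max 0 (q i - max 0 (Lcap c q d S (d i) -
        ∑ j ∈ S.filter (fun j => d j = d i ∧ j < i), q j)) / κ⌉ : ℝ)


lemma keyId (a b c : ℝ) (ha : 0 ≤ a) :
    max 0 (b - c) + max 0 (a - max 0 (c - b)) = max 0 (a + b - c) := by
  rcases le_total c b with h | h
  · rw [max_eq_right (by linarith : (0:ℝ) ≤ b - c), max_eq_left (by linarith : c - b ≤ 0),
      max_eq_right (by linarith : (0:ℝ) ≤ a - 0), max_eq_right (by linarith : (0:ℝ) ≤ a + b - c)]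
    ring
  · rw [max_eq_left (by linarith : b - c ≤ 0), max_eq_right (by linarith : (0:ℝ) ≤ c - b)]
    rcases le_total (a + b) c with h2 | h2
    · rw [max_eq_left (by linarith), max_eq_left (by linarith)]; ring
    · rw [max_eq_right (by linarith), max_eq_right (by linarith)]
      ring

lemma tele {n : ℕ} (q : Fin n → ℝ) (hq : ∀ i, 0 ≤ q i) (L : ℝ) (hL : 0 ≤ L)
    (F : Finset (Fin n)) :
    ∑ i ∈ F, max 0 (q i - max 0 (L - ∑ j ∈ F.filter (fun j => j < i), q j))
      = max 0 ((∑ i ∈ F, q i) - L) := by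
  induction F using Finset.strongInduction with
  | _ F ih =>
    rcases F.eq_empty_or_nonempty with rfl | hne
    · simp [max_eq_left (by linarith : -L ≤ 0)]
    · set m := F.max' hne with hmdef
      have hm : m ∈ F := F.max'_mem hne
      have h2 : F.filter (fun j => j < m) = F.erase m := by
        ext j
        rw [Finset.mem_filter, Finset.mem_erase]
        constructor
        · rintro ⟨hj, hlt⟩; exact ⟨ne_of_lt hlt, hj⟩
        · rintro ⟨hne', hj⟩; exact ⟨hj, lt_of_le_of_ne (F.le_max' j hj) hne'⟩
      have h1 : ∀ i ∈ F.erase m, (F.erase m).filter (fun j => j < i)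
          = F.filter (fun j => j < i) := by
        intro i hi
        have hi' : i < m := lt_of_le_of_ne (F.le_max' i (Finset.mem_of_mem_erase hi))
          (Finset.ne_of_mem_erase hi)
        ext j
        rw [Finset.mem_filter, Finset.mem_filter, Finset.mem_erase]
        constructor
        · rintro ⟨⟨_, hj⟩, hlt⟩; exact ⟨hj, hlt⟩
        · rintro ⟨hj, hlt⟩; exact ⟨⟨ne_of_lt (hlt.trans hi'), hj⟩, hlt⟩
      have hstep : ∑ i ∈ F.erase m, max 0 (q i - max 0 (L - ∑ j ∈ F.filter (fun j => j < i), q j))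
          = max 0 ((∑ i ∈ F.erase m, q i) - L) :=
        calc ∑ i ∈ F.erase m, max 0 (q i - max 0 (L - ∑ j ∈ F.filter (fun j => j < i), q j))
            = ∑ i ∈ F.erase m, max 0 (q i - max 0 (L - ∑ j ∈ (F.erase m).filter (fun j => j < i), q j)) :=
              Finset.sum_congr rfl (fun i hi => by rw [h1 i hi])
          _ = _ := ih _ (Finset.erase_ssubset hm)
      rw [← Finset.add_sum_erase F q hm,
        ← Finset.add_sum_erase F
          (fun i => max 0 (q i - max 0 (L - ∑ j ∈ F.filter (fun j => j < i), q j))) hm,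
        hstep, h2, add_comm, keyId _ _ _ (hq m)]


noncomputable def Acum {n : ℕ} (q : Fin n → ℝ) (d : Fin n → ℕ) (S : Finset (Fin n)) (t : ℕ) : ℝ :=
  ∑ i ∈ S.filter (fun i => d i ≤ t), q i

noncomputable def Mfun {n : ℕ} (c : ℕ → ℝ) (q : Fin n → ℝ) (d : Fin n → ℕ)
    (S : Finset (Fin n)) (t : ℕ) : ℝ :=
  (Finset.range (t + 1)).sup' ⟨0, Finset.mem_range.mpr (Nat.succ_pos t)⟩
    fun t' => Acum q d S t' - c t'

lemma acum_split {n : ℕ} (q : Fin n → ℝ) (d : Fin n → ℕ) (S : Finset (Fin n))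
    {s t : ℕ} (hst : s ≤ t) :
    Acum q d S t = Acum q d S s + ∑ i ∈ S.filter (fun i => s < d i ∧ d i ≤ t), q i := by
  unfold Acum
  rw [← Finset.sum_filter_add_sum_filter_not (S.filter (fun i => d i ≤ t)) (fun i => d i ≤ s),
    Finset.filter_filter, Finset.filter_filter]
  congr 1
  · refine Finset.sum_congr (Finset.filter_congr fun i _ => ?_) (fun _ _ => rfl)
    constructor
    · rintro ⟨_, h⟩; exact h
    · intro h; exact ⟨h.trans hst, h⟩
  · refine Finset.sum_congr (Finset.filter_congr fun i _ => ?_) (fun _ _ => rfl)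
    constructor
    · rintro ⟨h1, h2⟩; exact ⟨lt_of_not_ge h2, h1⟩
    · rintro ⟨h1, h2⟩; exact ⟨h2, not_le.mpr h1⟩

lemma lcap_formula {n : ℕ} (c : ℕ → ℝ) (q : Fin n → ℝ) (d : Fin n → ℕ)
    (S : Finset (Fin n)) (t : ℕ) (ht : 1 ≤ t) :
    Lcap c q d S t = c t - Acum q d S (t - 1) + Mfun c q d S (t - 1) := by
  have hne : (Finset.range t).Nonempty := ⟨0, Finset.mem_range.mpr ht⟩
  have hrange : Finset.range ((t - 1) + 1) = Finset.range t := by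
    congr 1; omega
  have hpt : ∀ t' ∈ Finset.range t,
      c t - c t' - ∑ i ∈ S.filter (fun i => t' < d i ∧ d i ≤ t - 1), q i
        = (c t - Acum q d S (t - 1)) + (Acum q d S t' - c t') := by
    intro t' ht'
    have : t' ≤ t - 1 := by have := Finset.mem_range.mp ht'; omega
    rw [acum_split q d S this]; ring
  have hM : Mfun c q d S (t - 1) = (Finset.range t).sup' hne fun t' => Acum q d S t' - c t' :=
    Finset.sup'_congr _ hrange (fun _ _ => rfl)
  rw [Lcap, dif_pos hne, Finset.sup'_congr hne rfl hpt, hM]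
  exact (Finset.comp_sup'_eq_sup'_comp hne (fun x => (c t - Acum q d S (t - 1)) + x)
    (fun x y => (max_add_add_left _ x y).symm)).symm

lemma mfun_succ {n : ℕ} (c : ℕ → ℝ) (q : Fin n → ℝ) (d : Fin n → ℕ)
    (S : Finset (Fin n)) (t : ℕ) :
    Mfun c q d S (t + 1) = max (Acum q d S (t + 1) - c (t + 1)) (Mfun c q d S t) := by
  have h : Mfun c q d S (t + 1) = (insert (t + 1) (Finset.range (t + 1))).sup'
      ⟨t + 1, Finset.mem_insert_self _ _⟩ (fun t' => Acum q d S t' - c t') :=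
    Finset.sup'_congr _ Finset.range_add_one (fun _ _ => rfl)
  rw [h, Finset.sup'_insert]
  rfl

lemma mfun_ge {n : ℕ} (c : ℕ → ℝ) (q : Fin n → ℝ) (d : Fin n → ℕ)
    (S : Finset (Fin n)) {s t : ℕ} (hst : s ≤ t) :
    Acum q d S s - c s ≤ Mfun c q d S t := by
  rw [Mfun]
  exact Finset.le_sup' (fun t' => Acum q d S t' - c t')
    (Finset.mem_range.mpr (Nat.lt_succ_of_le hst))

lemma lcap_nonneg {n : ℕ} {T : ℕ} (c : ℕ → ℝ) (hmono : ∀ s t, s ≤ t → t ≤ T → c s ≤ c t)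
    (q : Fin n → ℝ) (d : Fin n → ℕ) (S : Finset (Fin n)) {t : ℕ}
    (ht1 : 1 ≤ t) (htT : t ≤ T) : 0 ≤ Lcap c q d S t := by
  rw [lcap_formula c q d S t ht1]
  have h1 : Acum q d S (t - 1) - c (t - 1) ≤ Mfun c q d S (t - 1) := mfun_ge c q d S le_rfl
  have h2 : c (t - 1) ≤ c t := hmono _ _ (by omega) htT
  linarith

lemma overflow_eq_sum {n : ℕ} (T : ℕ) (hT : 1 ≤ T)
    (c : ℕ → ℝ) (hc0 : c 0 = 0) (hmono : ∀ s t, s ≤ t → t ≤ T → c s ≤ c t)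
    (q : Fin n → ℝ) (hq : ∀ i, 0 < q i)
    (d : Fin n → ℕ) (hd : ∀ i, 1 ≤ d i ∧ d i ≤ T) (S : Finset (Fin n)) :
    overflow T c q d S =
      ∑ i ∈ S, max 0 (q i - max 0 (Lcap c q d S (d i) -
        ∑ j ∈ S.filter (fun j => d j = d i ∧ j < i), q j)) := by
  -- group by deadline
  have hmaps : ∀ i ∈ S, d i ∈ Finset.range (T + 1) :=
    fun i _ => Finset.mem_range.mpr (Nat.lt_succ_of_le (hd i).2)
  rw [← Finset.sum_fiberwise_of_maps_to hmaps]
  -- per-period sums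
  have hfiber : ∀ t, 1 ≤ t → t ≤ T →
      ∑ i ∈ S.filter (fun i => d i = t), max 0 (q i - max 0 (Lcap c q d S (d i) -
          ∑ j ∈ S.filter (fun j => d j = d i ∧ j < i), q j))
        = Mfun c q d S t - Mfun c q d S (t - 1) := by
    intro t ht1 htT
    set F := S.filter (fun i => d i = t) with hF
    have hdi : ∀ i ∈ F, d i = t := fun i hi => (Finset.mem_filter.mp hi).2
    have hpre : ∀ i ∈ F, S.filter (fun j => d j = d i ∧ j < i) = F.filter (fun j => j < i) := by
      intro i hi
      rw [hF, Finset.filter_filter, hdi i hi]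
    have h1 : ∑ i ∈ F, max 0 (q i - max 0 (Lcap c q d S (d i) -
          ∑ j ∈ S.filter (fun j => d j = d i ∧ j < i), q j))
        = ∑ i ∈ F, max 0 (q i - max 0 (Lcap c q d S t -
          ∑ j ∈ F.filter (fun j => j < i), q j)) :=
      Finset.sum_congr rfl (fun i hi => by rw [hpre i hi, hdi i hi])
    rw [h1, tele q (fun i => (hq i).le) _ (lcap_nonneg c hmono q d S ht1 htT) F]
    have hQ : ∑ i ∈ F, q i = Acum q d S t - Acum q d S (t - 1) := by
      rw [acum_split q d S (show t - 1 ≤ t by omega)]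
      have : S.filter (fun i => t - 1 < d i ∧ d i ≤ t) = F := by
        apply Finset.filter_congr; intro i _
        constructor
        · rintro ⟨a, b⟩; omega
        · intro h; omega
      rw [this]; ring
    rw [hQ, lcap_formula c q d S t ht1]
    have hMt : Mfun c q d S t = max (Acum q d S t - c t) (Mfun c q d S (t - 1)) := by
      have : t = (t - 1) + 1 := by omega
      rw [this, mfun_succ]
      congr 2 <;> omega
    rw [hMt]
    rcases le_total (Acum q d S t - c t) (Mfun c q d S (t - 1)) with h | h
    · rw [max_eq_right h, max_eq_left (by linarith)]
      ring
    · rw [max_eq_left h, max_eq_right (by linarith)]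
      ring
  have hfiber0 : ∑ i ∈ S.filter (fun i => d i = 0), max 0 (q i - max 0 (Lcap c q d S (d i) -
      ∑ j ∈ S.filter (fun j => d j = d i ∧ j < i), q j)) = 0 := by
    have : S.filter (fun i => d i = 0) = ∅ := by
      apply Finset.filter_false_of_mem
      intro i _
      have := (hd i).1
      omega
    rw [this, Finset.sum_empty]
  -- telescoping over periods
  have hA0 : Acum q d S 0 = 0 := by
    rw [Acum]
    have : S.filter (fun i => d i ≤ 0) = ∅ := by
      apply Finset.filter_false_of_mem
      intro i _
      have := (hd i).1
      omega
    rw [this, Finset.sum_empty]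
  have hM0 : Mfun c q d S 0 = 0 := by
    have h1 : Mfun c q d S 0 ≤ 0 := by
      rw [Mfun]
      apply Finset.sup'_le
      intro b hb
      have hb0 : b = 0 := by simpa using hb
      rw [hb0, hA0, hc0]
      norm_num
    have h2 : (0:ℝ) ≤ Mfun c q d S 0 := by
      have := mfun_ge c q d S (le_refl 0)
      rw [hA0, hc0] at this
      linarith
    linarith
  have key : ∀ T', T' ≤ T → ∑ t ∈ Finset.range (T' + 1),
      (∑ i ∈ S.filter (fun i => d i = t), max 0 (q i - max 0 (Lcap c q d S (d i) -
        ∑ j ∈ S.filter (fun j => d j = d i ∧ j < i), q j))) = Mfun c q d S T' := by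
    intro T' hT'
    induction T' with
    | zero =>
      rw [Finset.sum_range_one, hfiber0, hM0]
    | succ k ih =>
      rw [Finset.sum_range_succ, ih (by omega), hfiber (k + 1) (by omega) hT',
        Nat.add_sub_cancel]
      ring
  rw [key T le_rfl]
  rfl

lemma floorCeilBounds (κ x : ℝ) (hκ : 0 < κ) :
    κ * (⌊x / κ⌋ : ℝ) ≤ x ∧ x ≤ κ * (⌊x / κ⌋ : ℝ) + κ ∧
    x ≤ κ * (⌈x / κ⌉ : ℝ) ∧ κ * (⌈x / κ⌉ : ℝ) ≤ x + κ := by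
  have h1 := Int.floor_le (x / κ)
  have h2 := Int.lt_floor_add_one (x / κ)
  have h3 := Int.le_ceil (x / κ)
  have h4 := Int.ceil_lt_add_one (x / κ)
  have hx : x / κ * κ = x := div_mul_cancel₀ x (ne_of_gt hκ)
  refine ⟨?_, ?_, ?_, ?_⟩ <;> nlinarith [mul_le_mul_of_nonneg_left h1 hκ.le,
    mul_le_mul_of_nonneg_left h2.le hκ.le, mul_le_mul_of_nonneg_left h3 hκ.le,
    mul_le_mul_of_nonneg_left h4.le hκ.le]

/-- For an MPBKP-S instance with items sorted by deadline and a quantum `κ > 0`: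
(i) `P̂(S) ≤ P(S) ≤ P̂(S) + 2nκ` for every `S`; and (ii) if `0 < ε < 1`, `P₀ ≤ P(S*)`, and
`κ = ε·P₀/(2n)`, then every maximizer `S'` of `P̂` satisfies
`P(S') ≥ P̂(S') ≥ (1-ε)·P(S*)`. -/
theorem stmt12 {n : ℕ} (T : ℕ) (hT : 1 ≤ T)
    (c : ℕ → ℝ) (hc0 : c 0 = 0) (hmono : ∀ s t, s ≤ t → t ≤ T → c s ≤ c t)
    (B : ℝ) (hB : 0 < B)
    (r q : Fin n → ℝ) (hr : ∀ i, 0 < r i) (hq : ∀ i, 0 < q i)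
    (d : Fin n → ℕ) (hd : ∀ i, 1 ≤ d i ∧ d i ≤ T)
    (hsorted : ∀ i j : Fin n, i ≤ j → d i ≤ d j)
    (κ : ℝ) (hκ : 0 < κ) :
    (∀ S : Finset (Fin n),
        roundedProfit c B r q d κ S ≤ profit T c B r q d S ∧
        profit T c B r q d S ≤ roundedProfit c B r q d κ S + 2 * n * κ) ∧
    (∀ (ε P₀ : ℝ) (Sstar S' : Finset (Fin n)), 0 < ε → ε < 1 →
        (∀ S : Finset (Fin n), profit T c B r q d S ≤ profit T c B r q d Sstar) →
        P₀ ≤ profit T c B r q d Sstar →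
        κ = ε * P₀ / (2 * n) →
        (∀ S : Finset (Fin n), roundedProfit c B r q d κ S ≤ roundedProfit c B r q d κ S') →
        roundedProfit c B r q d κ S' ≤ profit T c B r q d S' ∧
        (1 - ε) * profit T c B r q d Sstar ≤ roundedProfit c B r q d κ S') := by
  have hpartI : ∀ S : Finset (Fin n),
      roundedProfit c B r q d κ S ≤ profit T c B r q d S ∧
      profit T c B r q d S ≤ roundedProfit c B r q d κ S + 2 * n * κ := by
    intro S
    set f : Fin n → ℝ := fun i => B * max 0 (q i - max 0 (Lcap c q d S (d i) -
        ∑ j ∈ S.filter (fun j => d j = d i ∧ j < i), q j)) with hf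
    have hprofit : profit T c B r q d S = (∑ i ∈ S, r i) - ∑ i ∈ S, f i := by
      rw [profit, overflow_eq_sum T hT c hc0 hmono q hq d hd S, Finset.mul_sum]
    have hround : roundedProfit c B r q d κ S =
        (∑ i ∈ S, κ * (⌊r i / κ⌋ : ℝ)) - ∑ i ∈ S, κ * (⌈f i / κ⌉ : ℝ) := rfl
    have hcard : (S.card : ℝ) ≤ (n : ℝ) := by
      have h : S.card ≤ n := by simpa using Finset.card_le_univ S
      exact_mod_cast h
    constructor
    · rw [hprofit, hround]
      have h1 : ∑ i ∈ S, κ * (⌊r i / κ⌋ : ℝ) ≤ ∑ i ∈ S, r i :=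
        Finset.sum_le_sum fun i _ => (floorCeilBounds κ (r i) hκ).1
      have h2 : ∑ i ∈ S, f i ≤ ∑ i ∈ S, κ * (⌈f i / κ⌉ : ℝ) :=
        Finset.sum_le_sum fun i _ => (floorCeilBounds κ (f i) hκ).2.2.1
      linarith
    · rw [hprofit, hround]
      have h1 : ∑ i ∈ S, r i ≤ ∑ i ∈ S, (κ * (⌊r i / κ⌋ : ℝ) + κ) :=
        Finset.sum_le_sum fun i _ => (floorCeilBounds κ (r i) hκ).2.1
      have h2 : ∑ i ∈ S, κ * (⌈f i / κ⌉ : ℝ) ≤ ∑ i ∈ S, (f i + κ) :=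
        Finset.sum_le_sum fun i _ => (floorCeilBounds κ (f i) hκ).2.2.2
      rw [Finset.sum_add_distrib, Finset.sum_const, nsmul_eq_mul] at h1 h2
      nlinarith [hκ]
  refine ⟨hpartI, ?_⟩
  intro ε P₀ Sstar S' hε hε1 hopt hP0 hκeq hmax
  refine ⟨(hpartI S').1, ?_⟩
  have hn : (0:ℝ) < (n:ℝ) := by
    rcases Nat.eq_zero_or_pos n with h | h
    · exfalso
      rw [hκeq, h] at hκ
      simp at hκ
    · exact_mod_cast h
  have h2nκ : 2 * (n:ℝ) * κ = ε * P₀ := by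
    rw [hκeq]
    field_simp
  have c1 := (hpartI Sstar).2
  have c2 := hmax Sstar
  have c3 : ε * P₀ ≤ ε * profit T c B r q d Sstar := mul_le_mul_of_nonneg_left hP0 hε.le
  linarith
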